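/- Let W be a tensor with output indices I'_A, O_A, I'_B, O_B and input indices I_A, O'_A, I_B, O'_B (all finite nonempty) with W ≥ 0 elementwise. Then W is a boxworld process if and only if there exist a real number λ ∈ ℝ and boxworld processes W1, W2 with W1 = _{O'_B}W1 (causally ordered from Alice to Bob) and W2 = _{O'_A}W2 (causally ordered from Bob to Alice) such that W = λ·W1 + (1−λ)·W2. -/
import Mathlib


open Finset
open scoped Classical

noncomputable section

namespace Boxworld

/-- A bipartite 8-wire tensor `W(i'_A, o_A, i'_B, o_B | i_A, o'_A, i_B, o'_B)`,
with output indices `IA' OA IB' OB` and input indices `IA OA' IB OB'`. -/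
abbrev WTen (IA' OA IB' OB IA OA' IB OB' : Type) : Type :=
  IA' → OA → IB' → OB → IA → OA' → IB → OB' → ℝ

/-- A local-operation tensor `T(i, o' | i', o)`, argument order `(i', o, i, o')`. -/
abbrev OpTen (I' O I O' : Type) : Type := I' → O → I → O' → ℝ

section WireDefs

variable {IA' OA IB' OB IA OA' IB OB' : Type}
variable [Fintype IA'] [Fintype OA] [Fintype IB'] [Fintype OB]
variable [Fintype IA] [Fintype OA'] [Fintype IB] [Fintype OB']

/-- Reduce-and-replace over the index `IA'`. -/
def rrIA' (W : WTen IA' OA IB' OB IA OA' IB OB') : WTen IA' OA IB' OB IA OA' IB OB' :=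
  fun _ oa ib' ob ia oa' ib ob' => (∑ j, W j oa ib' ob ia oa' ib ob') / (Fintype.card IA' : ℝ)

/-- Reduce-and-replace over the index `OA`. -/
def rrOA (W : WTen IA' OA IB' OB IA OA' IB OB') : WTen IA' OA IB' OB IA OA' IB OB' :=
  fun ia' _ ib' ob ia oa' ib ob' => (∑ j, W ia' j ib' ob ia oa' ib ob') / (Fintype.card OA : ℝ)

/-- Reduce-and-replace over the index `IB'`. -/
def rrIB' (W : WTen IA' OA IB' OB IA OA' IB OB') : WTen IA' OA IB' OB IA OA' IB OB' :=
  fun ia' oa _ ob ia oa' ib ob' => (∑ j, W ia' oa j ob ia oa' ib ob') / (Fintype.card IB' : ℝ)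

/-- Reduce-and-replace over the index `OB`. -/
def rrOB (W : WTen IA' OA IB' OB IA OA' IB OB') : WTen IA' OA IB' OB IA OA' IB OB' :=
  fun ia' oa ib' _ ia oa' ib ob' => (∑ j, W ia' oa ib' j ia oa' ib ob') / (Fintype.card OB : ℝ)

/-- Reduce-and-replace over the index `IA`. -/
def rrIA (W : WTen IA' OA IB' OB IA OA' IB OB') : WTen IA' OA IB' OB IA OA' IB OB' :=
  fun ia' oa ib' ob _ oa' ib ob' => (∑ j, W ia' oa ib' ob j oa' ib ob') / (Fintype.card IA : ℝ)

/-- Reduce-and-replace over the index `OA'`. -/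
def rrOA' (W : WTen IA' OA IB' OB IA OA' IB OB') : WTen IA' OA IB' OB IA OA' IB OB' :=
  fun ia' oa ib' ob ia _ ib ob' => (∑ j, W ia' oa ib' ob ia j ib ob') / (Fintype.card OA' : ℝ)

/-- Reduce-and-replace over the index `IB`. -/
def rrIB (W : WTen IA' OA IB' OB IA OA' IB OB') : WTen IA' OA IB' OB IA OA' IB OB' :=
  fun ia' oa ib' ob ia oa' _ ob' => (∑ j, W ia' oa ib' ob ia oa' j ob') / (Fintype.card IB : ℝ)

/-- Reduce-and-replace over the index `OB'`. -/
def rrOB' (W : WTen IA' OA IB' OB IA OA' IB OB') : WTen IA' OA IB' OB IA OA' IB OB' :=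
  fun ia' oa ib' ob ia oa' ib _ => (∑ j, W ia' oa ib' ob ia oa' ib j) / (Fintype.card OB' : ℝ)

/-- Total reduction `r(W)`: the sum of all entries of `W`. -/
def tot (W : WTen IA' OA IB' OB IA OA' IB OB') : ℝ :=
  ∑ ia', ∑ oa, ∑ ib', ∑ ob, ∑ ia, ∑ oa', ∑ ib, ∑ ob', W ia' oa ib' ob ia oa' ib ob'

/-- Elementwise nonnegativity `W ≥ 0`. -/
def Nonneg8 (W : WTen IA' OA IB' OB IA OA' IB OB') : Prop :=
  ∀ ia' oa ib' ob ia oa' ib ob', 0 ≤ W ia' oa ib' ob ia oa' ib ob'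

/-- Reduce-and-replace over all of Alice's indices `𝔸 = I'_A I_A O_A O'_A`. -/
def rrA (W : WTen IA' OA IB' OB IA OA' IB OB') : WTen IA' OA IB' OB IA OA' IB OB' :=
  rrIA' (rrIA (rrOA (rrOA' W)))

/-- Reduce-and-replace over all of Bob's indices `𝔹 = I'_B I_B O_B O'_B`. -/
def rrB (W : WTen IA' OA IB' OB IA OA' IB OB') : WTen IA' OA IB' OB IA OA' IB OB' :=
  rrIB' (rrIB (rrOB (rrOB' W)))

/-- The combination `_{(1 − O'_A + O_A O'_A − I_A O_A O'_A)}W`. -/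
def LA (W : WTen IA' OA IB' OB IA OA' IB OB') : WTen IA' OA IB' OB IA OA' IB OB' :=
  W - rrOA' W + rrOA (rrOA' W) - rrIA (rrOA (rrOA' W))

/-- The combination `_{(1 − O'_B + O_B O'_B − I_B O_B O'_B)}W`. -/
def LB (W : WTen IA' OA IB' OB IA OA' IB OB') : WTen IA' OA IB' OB IA OA' IB OB' :=
  W - rrOB' W + rrOB (rrOB' W) - rrIB (rrOB (rrOB' W))

/-- A bipartite process tensor. -/
def IsProcessTensor (W : WTen IA' OA IB' OB IA OA' IB OB') : Prop :=
  Nonneg8 W ∧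
  tot W = (Fintype.card IA : ℝ) * (Fintype.card OA' : ℝ) *
      (Fintype.card IB : ℝ) * (Fintype.card OB' : ℝ) ∧
  rrA (LB W) = 0 ∧
  rrB (LA W) = 0 ∧
  LA (LB W) = 0

/-- Reduce-and-replace over all primed indices `O'_A O'_B I'_A I'_B`. -/
def rrPrimes (W : WTen IA' OA IB' OB IA OA' IB OB') : WTen IA' OA IB' OB IA OA' IB OB' :=
  rrOA' (rrOB' (rrIA' (rrIB' W)))

/-- The combination `_{(1 − O'_A + O'_A I'_A − O'_B O'_A I'_A)}W`. -/
def MA (W : WTen IA' OA IB' OB IA OA' IB OB') : WTen IA' OA IB' OB IA OA' IB OB' :=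
  W - rrOA' W + rrIA' (rrOA' W) - rrOB' (rrIA' (rrOA' W))

/-- The combination `_{(1 − O'_B + O'_B I'_B − O'_A O'_B I'_B)}W`. -/
def MB (W : WTen IA' OA IB' OB IA OA' IB OB') : WTen IA' OA IB' OB IA OA' IB OB' :=
  W - rrOB' W + rrIB' (rrOB' W) - rrOA' (rrIB' (rrOB' W))

/-- The four nonsignaling-preservation (NSP) conditions. -/
def SatisfiesNSP (W : WTen IA' OA IB' OB IA OA' IB OB') : Prop :=
  rrOA (rrPrimes W) = rrIA (rrOA (rrPrimes W)) ∧
  rrOB (rrPrimes W) = rrIB (rrOB (rrPrimes W)) ∧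
  rrOA (MA W) = rrIA (rrOA (MA W)) ∧
  rrOB (MB W) = rrIB (rrOB (MB W))

/-- A boxworld process. -/
def IsBoxworldProcess (W : WTen IA' OA IB' OB IA OA' IB OB') : Prop :=
  Nonneg8 W ∧
  tot W = (Fintype.card IA : ℝ) * (Fintype.card OA' : ℝ) *
      (Fintype.card IB : ℝ) * (Fintype.card OB' : ℝ) ∧
  rrA W = rrOB' (rrA W) ∧
  rrB W = rrOA' (rrB W) ∧
  W = rrOA' W + rrOB' W - rrOA' (rrOB' W) ∧
  rrOA W = rrIA (rrOA W) ∧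
  rrOB W = rrIB (rrOB W)

/-- The action `W * P` of a process tensor on a bipartite box
`P(o'_A, o'_B | i'_A, i'_B)`, contracting the indices `O'_A, O'_B, I'_A, I'_B`. -/
def actOnBox (W : WTen IA' OA IB' OB IA OA' IB OB')
    (P : OA' → OB' → IA' → IB' → ℝ) : OA → OB → IA → IB → ℝ :=
  fun oa ob ia ib =>
    ∑ ia', ∑ ib', ∑ oa', ∑ ob', W ia' oa ib' ob ia oa' ib ob' * P oa' ob' ia' ib'

end WireDefs

section OpDefs

variable {I' O I O' : Type}
variable [Fintype I'] [Fintype O] [Fintype I] [Fintype O']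

/-- Reduce-and-replace over the index `I'` of an operation tensor. -/
def rrOpI' (T : OpTen I' O I O') : OpTen I' O I O' :=
  fun _ o i o' => (∑ j, T j o i o') / (Fintype.card I' : ℝ)

/-- Reduce-and-replace over the index `O` of an operation tensor. -/
def rrOpO (T : OpTen I' O I O') : OpTen I' O I O' :=
  fun i' _ i o' => (∑ j, T i' j i o') / (Fintype.card O : ℝ)

/-- Reduce-and-replace over the index `I` of an operation tensor. -/
def rrOpI (T : OpTen I' O I O') : OpTen I' O I O' :=
  fun i' o _ o' => (∑ j, T i' o j o') / (Fintype.card I : ℝ)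

/-- Reduce-and-replace over the index `O'` of an operation tensor. -/
def rrOpO' (T : OpTen I' O I O') : OpTen I' O I O' :=
  fun i' o i _ => (∑ j, T i' o i j) / (Fintype.card O' : ℝ)

/-- Total reduction of an operation tensor. -/
def totOp (T : OpTen I' O I O') : ℝ := ∑ i', ∑ o, ∑ i, ∑ o', T i' o i o'

/-- A deterministic local operation. -/
def IsDetOp (T : OpTen I' O I O') : Prop :=
  totOp T = (Fintype.card I' : ℝ) * (Fintype.card O : ℝ) ∧
  rrOpI (rrOpO' T) = rrOpI' (rrOpI (rrOpO (rrOpO' T))) ∧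
  rrOpO' T = rrOpO (rrOpO' T)

/-- A set of probabilistic local operations `T^{a|x}(i, o' | i', o)`:
nonnegative tensors whose sum over the classical outcome `a` is, for each
classical input `x`, a deterministic local operation. -/
def IsLocalOps {A X : Type} [Fintype A] (T : A → X → OpTen I' O I O') : Prop :=
  (∀ a x i' o i o', 0 ≤ T a x i' o i o') ∧
  ∀ x, IsDetOp (fun i' o i o' => ∑ a, T a x i' o i o')

/-- A nonsignaling set of probabilistic local operations: either the
deterministic operation `T^x` is independent of `x` (case 1), or it is a
convex combination of deterministic pre-processings `f_λ` (possibly depending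
on `x`) and post-processings `g_λ` independent of both the box output and `x`
(case 2). -/
def IsNSLocalOps {A X : Type} [Fintype A] (T : A → X → OpTen I' O I O') : Prop :=
  IsLocalOps T ∧
  ((∀ x x' i' o i o', (∑ a, T a x i' o i o') = ∑ a, T a x' i' o i o') ∨
    ∃ (m : ℕ) (π : Fin m → ℝ) (f : Fin m → I' → X → I) (g : Fin m → I' → O'),
      (∀ l, 0 ≤ π l) ∧ (∑ l, π l = 1) ∧
      ∀ x i' o i o', (∑ a, T a x i' o i o') =
        ∑ l, π l * ((if i = f l i' x then (1 : ℝ) else 0) *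
          (if o' = g l i' then (1 : ℝ) else 0)))

end OpDefs

/-- A bipartite nonsignaling box `P(o_1, o_2 | i_1, i_2)`. -/
def IsNSBox {O1 O2 I1 I2 : Type} [Fintype O1] [Fintype O2]
    (P : O1 → O2 → I1 → I2 → ℝ) : Prop :=
  (∀ o1 o2 i1 i2, 0 ≤ P o1 o2 i1 i2) ∧
  (∀ i1 i2, ∑ o1, ∑ o2, P o1 o2 i1 i2 = 1) ∧
  (∀ o1 i1 i2 i2', ∑ o2, P o1 o2 i1 i2 = ∑ o2, P o1 o2 i1 i2') ∧
  (∀ o2 i1 i1' i2, ∑ o1, P o1 o2 i1 i2 = ∑ o1, P o1 o2 i1' i2)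

section Corr

variable {IA' OA IB' OB IA OA' IB OB' : Type}
variable [Fintype IA'] [Fintype OA] [Fintype IB'] [Fintype OB]
variable [Fintype IA] [Fintype OA'] [Fintype IB] [Fintype OB']
variable {A X B Y : Type}

/-- The correlations `(T^{A|X} ⊗ T^{B|Y}) * W` generated by local operations
acting on a process tensor: contraction over all eight wire indices. -/
def corr (TA : A → X → OpTen IA' OA IA OA') (TB : B → Y → OpTen IB' OB IB OB')
    (W : WTen IA' OA IB' OB IA OA' IB OB') (a : A) (b : B) (x : X) (y : Y) : ℝ :=
  ∑ ia', ∑ oa, ∑ ib', ∑ ob, ∑ ia, ∑ oa', ∑ ib, ∑ ob',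
    TA a x ia' oa ia oa' * TB b y ib' ob ib ob' * W ia' oa ib' ob ia oa' ib ob'

end Corr

set_option linter.unusedSectionVars false
set_option linter.dupNamespace false
section Aux
variable {IA' OA IB' OB IA OA' IB OB' : Type}
variable [Fintype IA'] [Fintype OA] [Fintype IB'] [Fintype OB]
variable [Fintype IA] [Fintype OA'] [Fintype IB] [Fintype OB']
variable [Nonempty IA'] [Nonempty OA] [Nonempty IB'] [Nonempty OB]
variable [Nonempty IA] [Nonempty OA'] [Nonempty IB] [Nonempty OB']

lemma wadd_apply (P Q : WTen IA' OA IB' OB IA OA' IB OB') (a b c d e f g h) :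
    (P + Q) a b c d e f g h = P a b c d e f g h + Q a b c d e f g h := rfl

lemma wsub_apply (P Q : WTen IA' OA IB' OB IA OA' IB OB') (a b c d e f g h) :
    (P - Q) a b c d e f g h = P a b c d e f g h - Q a b c d e f g h := rfl

lemma wsmul_apply (r : ℝ) (P : WTen IA' OA IB' OB IA OA' IB OB') (a b c d e f g h) :
    (r • P) a b c d e f g h = r * P a b c d e f g h := rfl


lemma add_IAp (P Q : WTen IA' OA IB' OB IA OA' IB OB') : rrIA' (P + Q) = rrIA' P + rrIA' Q := by
  funext a b c d e f g h
  simp [rrIA', wadd_apply, Finset.sum_add_distrib, add_div]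

lemma smul_IAp (r : ℝ) (P : WTen IA' OA IB' OB IA OA' IB OB') : rrIA' (r • P) = r • rrIA' P := by
  funext a b c d e f g h
  simp [rrIA', wsmul_apply, ← Finset.mul_sum, mul_div_assoc]

lemma sub_IAp (P Q : WTen IA' OA IB' OB IA OA' IB OB') : rrIA' (P - Q) = rrIA' P - rrIA' Q := by
  funext a b c d e f g h
  simp [rrIA', wsub_apply, Finset.sum_sub_distrib, sub_div]

lemma const_IAp (r : ℝ) :
    rrIA' (fun _ _ _ _ _ _ _ _ => r : WTen IA' OA IB' OB IA OA' IB OB') = fun _ _ _ _ _ _ _ _ => r := by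
  have hc : ((Fintype.card IA' : ℝ)) ≠ 0 := Nat.cast_ne_zero.2 Fintype.card_ne_zero
  funext a b c d e f g h
  simp only [rrIA']
  rw [Finset.sum_const, Finset.card_univ, nsmul_eq_mul, mul_div_cancel_left₀ _ hc]


lemma add_OA (P Q : WTen IA' OA IB' OB IA OA' IB OB') : rrOA (P + Q) = rrOA P + rrOA Q := by
  funext a b c d e f g h
  simp [rrOA, wadd_apply, Finset.sum_add_distrib, add_div]

lemma smul_OA (r : ℝ) (P : WTen IA' OA IB' OB IA OA' IB OB') : rrOA (r • P) = r • rrOA P := by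
  funext a b c d e f g h
  simp [rrOA, wsmul_apply, ← Finset.mul_sum, mul_div_assoc]

lemma sub_OA (P Q : WTen IA' OA IB' OB IA OA' IB OB') : rrOA (P - Q) = rrOA P - rrOA Q := by
  funext a b c d e f g h
  simp [rrOA, wsub_apply, Finset.sum_sub_distrib, sub_div]

lemma const_OA (r : ℝ) :
    rrOA (fun _ _ _ _ _ _ _ _ => r : WTen IA' OA IB' OB IA OA' IB OB') = fun _ _ _ _ _ _ _ _ => r := by
  have hc : ((Fintype.card OA : ℝ)) ≠ 0 := Nat.cast_ne_zero.2 Fintype.card_ne_zero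
  funext a b c d e f g h
  simp only [rrOA]
  rw [Finset.sum_const, Finset.card_univ, nsmul_eq_mul, mul_div_cancel_left₀ _ hc]


lemma add_IBp (P Q : WTen IA' OA IB' OB IA OA' IB OB') : rrIB' (P + Q) = rrIB' P + rrIB' Q := by
  funext a b c d e f g h
  simp [rrIB', wadd_apply, Finset.sum_add_distrib, add_div]

lemma smul_IBp (r : ℝ) (P : WTen IA' OA IB' OB IA OA' IB OB') : rrIB' (r • P) = r • rrIB' P := by
  funext a b c d e f g h
  simp [rrIB', wsmul_apply, ← Finset.mul_sum, mul_div_assoc]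

lemma sub_IBp (P Q : WTen IA' OA IB' OB IA OA' IB OB') : rrIB' (P - Q) = rrIB' P - rrIB' Q := by
  funext a b c d e f g h
  simp [rrIB', wsub_apply, Finset.sum_sub_distrib, sub_div]

lemma const_IBp (r : ℝ) :
    rrIB' (fun _ _ _ _ _ _ _ _ => r : WTen IA' OA IB' OB IA OA' IB OB') = fun _ _ _ _ _ _ _ _ => r := by
  have hc : ((Fintype.card IB' : ℝ)) ≠ 0 := Nat.cast_ne_zero.2 Fintype.card_ne_zero
  funext a b c d e f g h
  simp only [rrIB']
  rw [Finset.sum_const, Finset.card_univ, nsmul_eq_mul, mul_div_cancel_left₀ _ hc]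


lemma add_OB (P Q : WTen IA' OA IB' OB IA OA' IB OB') : rrOB (P + Q) = rrOB P + rrOB Q := by
  funext a b c d e f g h
  simp [rrOB, wadd_apply, Finset.sum_add_distrib, add_div]

lemma smul_OB (r : ℝ) (P : WTen IA' OA IB' OB IA OA' IB OB') : rrOB (r • P) = r • rrOB P := by
  funext a b c d e f g h
  simp [rrOB, wsmul_apply, ← Finset.mul_sum, mul_div_assoc]

lemma sub_OB (P Q : WTen IA' OA IB' OB IA OA' IB OB') : rrOB (P - Q) = rrOB P - rrOB Q := by
  funext a b c d e f g h
  simp [rrOB, wsub_apply, Finset.sum_sub_distrib, sub_div]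

lemma const_OB (r : ℝ) :
    rrOB (fun _ _ _ _ _ _ _ _ => r : WTen IA' OA IB' OB IA OA' IB OB') = fun _ _ _ _ _ _ _ _ => r := by
  have hc : ((Fintype.card OB : ℝ)) ≠ 0 := Nat.cast_ne_zero.2 Fintype.card_ne_zero
  funext a b c d e f g h
  simp only [rrOB]
  rw [Finset.sum_const, Finset.card_univ, nsmul_eq_mul, mul_div_cancel_left₀ _ hc]


lemma add_IA (P Q : WTen IA' OA IB' OB IA OA' IB OB') : rrIA (P + Q) = rrIA P + rrIA Q := by
  funext a b c d e f g h
  simp [rrIA, wadd_apply, Finset.sum_add_distrib, add_div]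

lemma smul_IA (r : ℝ) (P : WTen IA' OA IB' OB IA OA' IB OB') : rrIA (r • P) = r • rrIA P := by
  funext a b c d e f g h
  simp [rrIA, wsmul_apply, ← Finset.mul_sum, mul_div_assoc]

lemma sub_IA (P Q : WTen IA' OA IB' OB IA OA' IB OB') : rrIA (P - Q) = rrIA P - rrIA Q := by
  funext a b c d e f g h
  simp [rrIA, wsub_apply, Finset.sum_sub_distrib, sub_div]

lemma const_IA (r : ℝ) :
    rrIA (fun _ _ _ _ _ _ _ _ => r : WTen IA' OA IB' OB IA OA' IB OB') = fun _ _ _ _ _ _ _ _ => r := by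
  have hc : ((Fintype.card IA : ℝ)) ≠ 0 := Nat.cast_ne_zero.2 Fintype.card_ne_zero
  funext a b c d e f g h
  simp only [rrIA]
  rw [Finset.sum_const, Finset.card_univ, nsmul_eq_mul, mul_div_cancel_left₀ _ hc]


lemma add_OAp (P Q : WTen IA' OA IB' OB IA OA' IB OB') : rrOA' (P + Q) = rrOA' P + rrOA' Q := by
  funext a b c d e f g h
  simp [rrOA', wadd_apply, Finset.sum_add_distrib, add_div]

lemma smul_OAp (r : ℝ) (P : WTen IA' OA IB' OB IA OA' IB OB') : rrOA' (r • P) = r • rrOA' P := by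
  funext a b c d e f g h
  simp [rrOA', wsmul_apply, ← Finset.mul_sum, mul_div_assoc]

lemma sub_OAp (P Q : WTen IA' OA IB' OB IA OA' IB OB') : rrOA' (P - Q) = rrOA' P - rrOA' Q := by
  funext a b c d e f g h
  simp [rrOA', wsub_apply, Finset.sum_sub_distrib, sub_div]

lemma const_OAp (r : ℝ) :
    rrOA' (fun _ _ _ _ _ _ _ _ => r : WTen IA' OA IB' OB IA OA' IB OB') = fun _ _ _ _ _ _ _ _ => r := by
  have hc : ((Fintype.card OA' : ℝ)) ≠ 0 := Nat.cast_ne_zero.2 Fintype.card_ne_zero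
  funext a b c d e f g h
  simp only [rrOA']
  rw [Finset.sum_const, Finset.card_univ, nsmul_eq_mul, mul_div_cancel_left₀ _ hc]


lemma add_IB (P Q : WTen IA' OA IB' OB IA OA' IB OB') : rrIB (P + Q) = rrIB P + rrIB Q := by
  funext a b c d e f g h
  simp [rrIB, wadd_apply, Finset.sum_add_distrib, add_div]

lemma smul_IB (r : ℝ) (P : WTen IA' OA IB' OB IA OA' IB OB') : rrIB (r • P) = r • rrIB P := by
  funext a b c d e f g h
  simp [rrIB, wsmul_apply, ← Finset.mul_sum, mul_div_assoc]

lemma sub_IB (P Q : WTen IA' OA IB' OB IA OA' IB OB') : rrIB (P - Q) = rrIB P - rrIB Q := by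
  funext a b c d e f g h
  simp [rrIB, wsub_apply, Finset.sum_sub_distrib, sub_div]

lemma const_IB (r : ℝ) :
    rrIB (fun _ _ _ _ _ _ _ _ => r : WTen IA' OA IB' OB IA OA' IB OB') = fun _ _ _ _ _ _ _ _ => r := by
  have hc : ((Fintype.card IB : ℝ)) ≠ 0 := Nat.cast_ne_zero.2 Fintype.card_ne_zero
  funext a b c d e f g h
  simp only [rrIB]
  rw [Finset.sum_const, Finset.card_univ, nsmul_eq_mul, mul_div_cancel_left₀ _ hc]


lemma add_OBp (P Q : WTen IA' OA IB' OB IA OA' IB OB') : rrOB' (P + Q) = rrOB' P + rrOB' Q := by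
  funext a b c d e f g h
  simp [rrOB', wadd_apply, Finset.sum_add_distrib, add_div]

lemma smul_OBp (r : ℝ) (P : WTen IA' OA IB' OB IA OA' IB OB') : rrOB' (r • P) = r • rrOB' P := by
  funext a b c d e f g h
  simp [rrOB', wsmul_apply, ← Finset.mul_sum, mul_div_assoc]

lemma sub_OBp (P Q : WTen IA' OA IB' OB IA OA' IB OB') : rrOB' (P - Q) = rrOB' P - rrOB' Q := by
  funext a b c d e f g h
  simp [rrOB', wsub_apply, Finset.sum_sub_distrib, sub_div]

lemma const_OBp (r : ℝ) :
    rrOB' (fun _ _ _ _ _ _ _ _ => r : WTen IA' OA IB' OB IA OA' IB OB') = fun _ _ _ _ _ _ _ _ => r := by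
  have hc : ((Fintype.card OB' : ℝ)) ≠ 0 := Nat.cast_ne_zero.2 Fintype.card_ne_zero
  funext a b c d e f g h
  simp only [rrOB']
  rw [Finset.sum_const, Finset.card_univ, nsmul_eq_mul, mul_div_cancel_left₀ _ hc]


lemma comm_OAp_OBp (P : WTen IA' OA IB' OB IA OA' IB OB') : rrOA' (rrOB' P) = rrOB' (rrOA' P) := by
  funext a b c d e f g h
  simp only [rrOA', rrOB']
  rw [← Finset.sum_div, ← Finset.sum_div, Finset.sum_comm]
  ring


lemma comm_IBp_OAp (P : WTen IA' OA IB' OB IA OA' IB OB') : rrIB' (rrOA' P) = rrOA' (rrIB' P) := by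
  funext a b c d e f g h
  simp only [rrIB', rrOA']
  rw [← Finset.sum_div, ← Finset.sum_div, Finset.sum_comm]
  ring


lemma comm_IB_OAp (P : WTen IA' OA IB' OB IA OA' IB OB') : rrIB (rrOA' P) = rrOA' (rrIB P) := by
  funext a b c d e f g h
  simp only [rrIB, rrOA']
  rw [← Finset.sum_div, ← Finset.sum_div, Finset.sum_comm]
  ring


lemma comm_OB_OAp (P : WTen IA' OA IB' OB IA OA' IB OB') : rrOB (rrOA' P) = rrOA' (rrOB P) := by
  funext a b c d e f g h
  simp only [rrOB, rrOA']
  rw [← Finset.sum_div, ← Finset.sum_div, Finset.sum_comm]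
  ring


lemma comm_OA_OAp (P : WTen IA' OA IB' OB IA OA' IB OB') : rrOA (rrOA' P) = rrOA' (rrOA P) := by
  funext a b c d e f g h
  simp only [rrOA, rrOA']
  rw [← Finset.sum_div, ← Finset.sum_div, Finset.sum_comm]
  ring


lemma comm_IA_OAp (P : WTen IA' OA IB' OB IA OA' IB OB') : rrIA (rrOA' P) = rrOA' (rrIA P) := by
  funext a b c d e f g h
  simp only [rrIA, rrOA']
  rw [← Finset.sum_div, ← Finset.sum_div, Finset.sum_comm]
  ring


lemma comm_OA_OBp (P : WTen IA' OA IB' OB IA OA' IB OB') : rrOA (rrOB' P) = rrOB' (rrOA P) := by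
  funext a b c d e f g h
  simp only [rrOA, rrOB']
  rw [← Finset.sum_div, ← Finset.sum_div, Finset.sum_comm]
  ring


lemma comm_IA_OBp (P : WTen IA' OA IB' OB IA OA' IB OB') : rrIA (rrOB' P) = rrOB' (rrIA P) := by
  funext a b c d e f g h
  simp only [rrIA, rrOB']
  rw [← Finset.sum_div, ← Finset.sum_div, Finset.sum_comm]
  ring


lemma comm_OB_OBp (P : WTen IA' OA IB' OB IA OA' IB OB') : rrOB (rrOB' P) = rrOB' (rrOB P) := by
  funext a b c d e f g h
  simp only [rrOB, rrOB']
  rw [← Finset.sum_div, ← Finset.sum_div, Finset.sum_comm]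
  ring


lemma comm_IB_OBp (P : WTen IA' OA IB' OB IA OA' IB OB') : rrIB (rrOB' P) = rrOB' (rrIB P) := by
  funext a b c d e f g h
  simp only [rrIB, rrOB']
  rw [← Finset.sum_div, ← Finset.sum_div, Finset.sum_comm]
  ring


lemma idem_OAp (P : WTen IA' OA IB' OB IA OA' IB OB') : rrOA' (rrOA' P) = rrOA' P := by
  have hc : ((Fintype.card OA' : ℝ)) ≠ 0 := Nat.cast_ne_zero.2 Fintype.card_ne_zero
  funext a b c d e f g h
  simp only [rrOA']
  rw [Finset.sum_const, Finset.card_univ, nsmul_eq_mul, mul_comm, div_mul_cancel₀ _ hc]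


lemma idem_OBp (P : WTen IA' OA IB' OB IA OA' IB OB') : rrOB' (rrOB' P) = rrOB' P := by
  have hc : ((Fintype.card OB' : ℝ)) ≠ 0 := Nat.cast_ne_zero.2 Fintype.card_ne_zero
  funext a b c d e f g h
  simp only [rrOB']
  rw [Finset.sum_const, Finset.card_univ, nsmul_eq_mul, mul_comm, div_mul_cancel₀ _ hc]



lemma tot_add (P Q : WTen IA' OA IB' OB IA OA' IB OB') : tot (P + Q) = tot P + tot Q := by
  simp [tot, wadd_apply, Finset.sum_add_distrib]

lemma tot_smul (r : ℝ) (P : WTen IA' OA IB' OB IA OA' IB OB') : tot (r • P) = r * tot P := by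
  simp [tot, wsmul_apply, ← Finset.mul_sum]

lemma tot_rrOB' (P : WTen IA' OA IB' OB IA OA' IB OB') : tot (rrOB' P) = tot P := by
  have hc : ((Fintype.card OB' : ℝ)) ≠ 0 := Nat.cast_ne_zero.2 Fintype.card_ne_zero
  simp only [tot, rrOB', ← Finset.sum_div, Finset.sum_const, Finset.card_univ,
    nsmul_eq_mul, mul_div_cancel_left₀ _ hc]

lemma tot_rrOA' (P : WTen IA' OA IB' OB IA OA' IB OB') : tot (rrOA' P) = tot P := by
  have hc : ((Fintype.card OA' : ℝ)) ≠ 0 := Nat.cast_ne_zero.2 Fintype.card_ne_zero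
  have swap3 : ∀ (f : OA' → IB → OB' → ℝ),
      (∑ x, ∑ y, ∑ z, f x y z) = ∑ y, ∑ z, ∑ x, f x y z := by
    intro f
    rw [Finset.sum_comm]
    exact Finset.sum_congr rfl fun y _ => Finset.sum_comm
  simp only [tot, rrOA']
  refine Finset.sum_congr rfl fun ia' _ => Finset.sum_congr rfl fun oa _ =>
    Finset.sum_congr rfl fun ib' _ => Finset.sum_congr rfl fun ob _ =>
    Finset.sum_congr rfl fun ia _ => ?_
  calc (∑ x, ∑ y, ∑ z, (fun x y z => (∑ j, P ia' oa ib' ob ia j y z) /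
          (Fintype.card OA' : ℝ)) x y z)
      = ∑ y, ∑ z, ∑ x, (fun x y z => (∑ j, P ia' oa ib' ob ia j y z) /
          (Fintype.card OA' : ℝ)) x y z := swap3 _
    _ = ∑ y, ∑ z, ∑ x, (fun x y z => P ia' oa ib' ob ia x y z) x y z := ?_
    _ = ∑ x, ∑ y, ∑ z, (fun x y z => P ia' oa ib' ob ia x y z) x y z := (swap3 _).symm
  refine Finset.sum_congr rfl fun ib _ => Finset.sum_congr rfl fun ob' _ => ?_
  simp only []
  rw [Finset.sum_const, Finset.card_univ, nsmul_eq_mul, mul_comm, div_mul_cancel₀ _ hc]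

lemma tot_const (r : ℝ) :
    tot (fun _ _ _ _ _ _ _ _ => r : WTen IA' OA IB' OB IA OA' IB OB') =
      (Fintype.card IA' : ℝ) * (Fintype.card OA) * (Fintype.card IB') * (Fintype.card OB) *
      (Fintype.card IA) * (Fintype.card OA') * (Fintype.card IB) * (Fintype.card OB') * r := by
  simp [tot, Finset.sum_const, Finset.card_univ, nsmul_eq_mul]
  ring

end Aux

section Aux2
variable {IA' OA IB' OB IA OA' IB OB' : Type}
variable [Fintype IA'] [Fintype OA] [Fintype IB'] [Fintype OB]
variable [Fintype IA] [Fintype OA'] [Fintype IB] [Fintype OB']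
variable [Nonempty IA'] [Nonempty OA] [Nonempty IB'] [Nonempty OB]
variable [Nonempty IA] [Nonempty OA'] [Nonempty IB] [Nonempty OB']

lemma tot_sub (P Q : WTen IA' OA IB' OB IA OA' IB OB') : tot (P - Q) = tot P - tot Q := by
  simp [tot, wsub_apply, Finset.sum_sub_distrib]

lemma add_rrA (P Q : WTen IA' OA IB' OB IA OA' IB OB') : rrA (P + Q) = rrA P + rrA Q := by
  simp only [rrA, add_OAp, add_OA, add_IA, add_IAp]

lemma smul_rrA (r : ℝ) (P : WTen IA' OA IB' OB IA OA' IB OB') : rrA (r • P) = r • rrA P := by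
  simp only [rrA, smul_OAp, smul_OA, smul_IA, smul_IAp]

lemma sub_rrA (P Q : WTen IA' OA IB' OB IA OA' IB OB') : rrA (P - Q) = rrA P - rrA Q := by
  simp only [rrA, sub_OAp, sub_OA, sub_IA, sub_IAp]

lemma add_rrB (P Q : WTen IA' OA IB' OB IA OA' IB OB') : rrB (P + Q) = rrB P + rrB Q := by
  simp only [rrB, add_OBp, add_OB, add_IB, add_IBp]

lemma smul_rrB (r : ℝ) (P : WTen IA' OA IB' OB IA OA' IB OB') : rrB (r • P) = r • rrB P := by
  simp only [rrB, smul_OBp, smul_OB, smul_IB, smul_IBp]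

lemma sub_rrB (P Q : WTen IA' OA IB' OB IA OA' IB OB') : rrB (P - Q) = rrB P - rrB Q := by
  simp only [rrB, sub_OBp, sub_OB, sub_IB, sub_IBp]

lemma const_rrA (r : ℝ) :
    rrA (fun _ _ _ _ _ _ _ _ => r : WTen IA' OA IB' OB IA OA' IB OB')
      = fun _ _ _ _ _ _ _ _ => r := by
  simp only [rrA, const_OAp, const_OA, const_IA, const_IAp]

lemma const_rrB (r : ℝ) :
    rrB (fun _ _ _ _ _ _ _ _ => r : WTen IA' OA IB' OB IA OA' IB OB')
      = fun _ _ _ _ _ _ _ _ => r := by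
  simp only [rrB, const_OBp, const_OB, const_IB, const_IBp]

lemma rrA_rrOAp (P : WTen IA' OA IB' OB IA OA' IB OB') : rrA (rrOA' P) = rrA P := by
  simp only [rrA, idem_OAp]

lemma rrB_rrOBp (P : WTen IA' OA IB' OB IA OA' IB OB') : rrB (rrOB' P) = rrB P := by
  simp only [rrB, idem_OBp]

lemma rrB_rrOAp (P : WTen IA' OA IB' OB IA OA' IB OB') : rrB (rrOA' P) = rrOA' (rrB P) := by
  simp only [rrB, ← comm_OAp_OBp, comm_OB_OAp, comm_IB_OAp, comm_IBp_OAp]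

lemma nonneg_rrOAp (P : WTen IA' OA IB' OB IA OA' IB OB') (hP : Nonneg8 P) :
    Nonneg8 (rrOA' P) := by
  intro a b c d e f g h
  apply div_nonneg
  · exact Finset.sum_nonneg fun j _ => hP a b c d e j g h
  · positivity

lemma entry_le_tot (Q : WTen IA' OA IB' OB IA OA' IB OB')
    (hQ : ∀ a b c d e f g h, 0 ≤ Q a b c d e f g h)
    (a : IA') (b : OA) (c : IB') (d : OB) (e : IA) (f : OA') (g : IB) (h : OB') :
    Q a b c d e f g h ≤ tot Q := by
  have n1 : ∀ a b c d e f g, 0 ≤ ∑ x, Q a b c d e f g x :=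
    fun a b c d e f g => Finset.sum_nonneg fun x _ => hQ a b c d e f g x
  have n2 : ∀ a b c d e f, 0 ≤ ∑ x, ∑ y, Q a b c d e f x y :=
    fun a b c d e f => Finset.sum_nonneg fun x _ => n1 a b c d e f x
  have n3 : ∀ a b c d e, 0 ≤ ∑ x, ∑ y, ∑ z, Q a b c d e x y z :=
    fun a b c d e => Finset.sum_nonneg fun x _ => n2 a b c d e x
  have n4 : ∀ a b c d, 0 ≤ ∑ w, ∑ x, ∑ y, ∑ z, Q a b c d w x y z :=
    fun a b c d => Finset.sum_nonneg fun w _ => n3 a b c d w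
  have n5 : ∀ a b c, 0 ≤ ∑ v, ∑ w, ∑ x, ∑ y, ∑ z, Q a b c v w x y z :=
    fun a b c => Finset.sum_nonneg fun v _ => n4 a b c v
  have n6 : ∀ a b, 0 ≤ ∑ u, ∑ v, ∑ w, ∑ x, ∑ y, ∑ z, Q a b u v w x y z :=
    fun a b => Finset.sum_nonneg fun u _ => n5 a b u
  have n7 : ∀ a, 0 ≤ ∑ t, ∑ u, ∑ v, ∑ w, ∑ x, ∑ y, ∑ z, Q a t u v w x y z :=
    fun a => Finset.sum_nonneg fun t _ => n6 a t
  calc Q a b c d e f g h ≤ ∑ x, Q a b c d e f g x :=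
        Finset.single_le_sum (fun i _ => hQ a b c d e f g i) (Finset.mem_univ h)
    _ ≤ ∑ y, ∑ x, Q a b c d e f y x :=
        Finset.single_le_sum (fun i _ => n1 a b c d e f i) (Finset.mem_univ g)
    _ ≤ ∑ y, ∑ x, ∑ w, Q a b c d e y x w :=
        Finset.single_le_sum (fun i _ => n2 a b c d e i) (Finset.mem_univ f)
    _ ≤ ∑ y, ∑ x, ∑ w, ∑ v, Q a b c d y x w v :=
        Finset.single_le_sum (fun i _ => n3 a b c d i) (Finset.mem_univ e)
    _ ≤ ∑ y, ∑ x, ∑ w, ∑ v, ∑ u, Q a b c y x w v u :=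
        Finset.single_le_sum (fun i _ => n4 a b c i) (Finset.mem_univ d)
    _ ≤ ∑ y, ∑ x, ∑ w, ∑ v, ∑ u, ∑ t, Q a b y x w v u t :=
        Finset.single_le_sum (fun i _ => n5 a b i) (Finset.mem_univ c)
    _ ≤ ∑ y, ∑ x, ∑ w, ∑ v, ∑ u, ∑ t, ∑ s, Q a y x w v u t s :=
        Finset.single_le_sum (fun i _ => n6 a i) (Finset.mem_univ b)
    _ ≤ ∑ y, ∑ x, ∑ w, ∑ v, ∑ u, ∑ t, ∑ s, ∑ r, Q y x w v u t s r :=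
        Finset.single_le_sum (fun i _ => n7 i) (Finset.mem_univ a)
    _ = tot Q := rfl


lemma tot_nonneg (Q : WTen IA' OA IB' OB IA OA' IB OB')
    (hQ : ∀ a b c d e f g h, 0 ≤ Q a b c d e f g h) : 0 ≤ tot Q := by
  refine Finset.sum_nonneg fun a _ => Finset.sum_nonneg fun b _ => Finset.sum_nonneg fun c _ =>
    Finset.sum_nonneg fun d _ => Finset.sum_nonneg fun e _ => Finset.sum_nonneg fun f _ =>
    Finset.sum_nonneg fun g _ => Finset.sum_nonneg fun h _ => hQ a b c d e f g h

end Aux2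

theorem statement_10
    {IA' OA IB' OB IA OA' IB OB' : Type}
    [Fintype IA'] [Fintype OA] [Fintype IB'] [Fintype OB]
    [Fintype IA] [Fintype OA'] [Fintype IB] [Fintype OB']
    [Nonempty IA'] [Nonempty OA] [Nonempty IB'] [Nonempty OB]
    [Nonempty IA] [Nonempty OA'] [Nonempty IB] [Nonempty OB']
    (W : WTen IA' OA IB' OB IA OA' IB OB') (hpos : Nonneg8 W) :
    IsBoxworldProcess W ↔
      ∃ (lam : ℝ) (W1 W2 : WTen IA' OA IB' OB IA OA' IB OB'),
        IsBoxworldProcess W1 ∧ W1 = rrOB' W1 ∧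
        IsBoxworldProcess W2 ∧ W2 = rrOA' W2 ∧
        W = lam • W1 + (1 - lam) • W2 := by
  constructor
  · intro hW
    obtain ⟨hWpos, hWtot, hWc2, hWc3, hWc4, hWc5a, hWc5b⟩ := hW
    have hIA : (0:ℝ) < Fintype.card IA := by exact_mod_cast Fintype.card_pos
    have hOAp0 : (0:ℝ) < Fintype.card OA' := by exact_mod_cast Fintype.card_pos
    have hIB : (0:ℝ) < Fintype.card IB := by exact_mod_cast Fintype.card_pos
    have hOBp0 : (0:ℝ) < Fintype.card OB' := by exact_mod_cast Fintype.card_pos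
    have hIAp0 : (0:ℝ) < Fintype.card IA' := by exact_mod_cast Fintype.card_pos
    have hOA0 : (0:ℝ) < Fintype.card OA := by exact_mod_cast Fintype.card_pos
    have hIBp0 : (0:ℝ) < Fintype.card IB' := by exact_mod_cast Fintype.card_pos
    have hOB0 : (0:ℝ) < Fintype.card OB := by exact_mod_cast Fintype.card_pos
    set DT : ℝ := (Fintype.card IA : ℝ) * (Fintype.card OA' : ℝ) *
      (Fintype.card IB : ℝ) * (Fintype.card OB' : ℝ) with hDT
    set PT : ℝ := (Fintype.card IA' : ℝ) * (Fintype.card OA : ℝ) * (Fintype.card IB' : ℝ) *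
      (Fintype.card OB : ℝ) * (Fintype.card IA : ℝ) * (Fintype.card OA' : ℝ) *
      (Fintype.card IB : ℝ) * (Fintype.card OB' : ℝ) with hPT
    have hDTpos : 0 < DT := by
      rw [hDT]; exact mul_pos (mul_pos (mul_pos hIA hOAp0) hIB) hOBp0
    have hPTpos : 0 < PT := by
      rw [hPT]
      exact mul_pos (mul_pos (mul_pos (mul_pos (mul_pos (mul_pos (mul_pos
        hIAp0 hOA0) hIBp0) hOB0) hIA) hOAp0) hIB) hOBp0
    set U := rrOB' W with hU
    set V := rrOA' W with hV
    set K := rrOA' U with hK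
    set Z := U - K with hZ
    have hUOBp : rrOB' U = U := by rw [hU]; exact idem_OBp W
    have hKOAp : rrOA' K = K := by rw [hK]; exact idem_OAp U
    have hKOBp : rrOB' K = K := by rw [hK, hU, ← comm_OAp_OBp, idem_OBp]
    have hVOAp : rrOA' V = V := by rw [hV]; exact idem_OAp W
    have hZOBp : rrOB' Z = Z := by rw [hZ, sub_OBp, hUOBp, hKOBp]
    have hZOAp : rrOA' Z = 0 := by rw [hZ, sub_OAp, hKOAp, ← hK, sub_self]
    have hZA : rrA Z = 0 := by rw [hZ, sub_rrA, hK, rrA_rrOAp, sub_self]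
    have hBU : rrB U = rrB W := by rw [hU]; exact rrB_rrOBp W
    have hZB : rrB Z = 0 := by rw [hZ, sub_rrB, hK, rrB_rrOAp, hBU, ← hWc3, sub_self]
    have hU5a : rrOA U = rrIA (rrOA U) := by rw [hU, comm_OA_OBp, comm_IA_OBp, ← hWc5a]
    have hK5a : rrOA K = rrIA (rrOA K) := by rw [hK, comm_OA_OAp, comm_IA_OAp, ← hU5a]
    have hZ5a : rrOA Z = rrIA (rrOA Z) := by rw [hZ, sub_OA, sub_IA, ← hU5a, ← hK5a]
    have hU5b : rrOB U = rrIB (rrOB U) := by rw [hU, comm_OB_OBp, comm_IB_OBp, ← hWc5b]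
    have hK5b : rrOB K = rrIB (rrOB K) := by rw [hK, comm_OB_OAp, comm_IB_OAp, ← hU5b]
    have hZ5b : rrOB Z = rrIB (rrOB Z) := by rw [hZ, sub_OB, sub_IB, ← hU5b, ← hK5b]
    have htotZ : tot Z = 0 := by rw [hZ, tot_sub, hK, tot_rrOA', sub_self]
    have htotV : tot V = DT := by rw [hV, tot_rrOA', hWtot]
    have hAV : rrA V = rrA W := by rw [hV]; exact rrA_rrOAp W
    have hBV : rrB V = rrOA' (rrB W) := by rw [hV]; exact rrB_rrOAp W
    have hV5a : rrOA V = rrIA (rrOA V) := by rw [hV, comm_OA_OAp, comm_IA_OAp, ← hWc5a]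
    have hV5b : rrOB V = rrIB (rrOB V) := by rw [hV, comm_OB_OAp, comm_IB_OAp, ← hWc5b]
    have hVpos : Nonneg8 V := by rw [hV]; exact nonneg_rrOAp W hpos
    set cc : ℝ := 1 + tot (fun a b c d e f g h => |Z a b c d e f g h|) with hcc
    have habs : ∀ (a : IA') (b : OA) (c : IB') (d : OB) (e : IA) (f : OA') (g : IB) (h : OB'),
        0 ≤ |Z a b c d e f g h| := fun _ _ _ _ _ _ _ _ => abs_nonneg _
    have hccpos : 0 < cc := by
      rw [hcc]
      have := tot_nonneg (fun a b c d e f g h => |Z a b c d e f g h|) habs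
      linarith
    have hZle : ∀ (a : IA') (b : OA) (c : IB') (d : OB) (e : IA) (f : OA') (g : IB) (h : OB'),
        Z a b c d e f g h ≤ cc := by
      intro a b c d e f g h
      have h1 := entry_le_tot (fun a b c d e f g h => |Z a b c d e f g h|) habs a b c d e f g h
      have h2 : Z a b c d e f g h ≤ |Z a b c d e f g h| := le_abs_self _
      rw [hcc]
      linarith
    set lam : ℝ := -(cc * PT / DT) with hlam
    have hlamneg : lam < 0 := by
      rw [hlam]
      have : 0 < cc * PT / DT := div_pos (mul_pos hccpos hPTpos) hDTpos
      linarith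
    have hlamne : lam ≠ 0 := ne_of_lt hlamneg
    have h1mlam : (0:ℝ) < 1 - lam := by linarith
    have h1mlamne : (1 - lam) ≠ 0 := ne_of_gt h1mlam
    set bet : ℝ := (1 - lam)⁻¹ with hbet
    have hbetpos : 0 < bet := by rw [hbet]; exact inv_pos.2 h1mlam
    have hbetle : bet ≤ 1 := by
      rw [hbet, inv_eq_one_div, div_le_one h1mlam]; linarith
    set u : WTen IA' OA IB' OB IA OA' IB OB' := fun _ _ _ _ _ _ _ _ => DT / PT with hu
    have huOAp : rrOA' u = u := by rw [hu]; exact const_OAp _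
    have huOBp : rrOB' u = u := by rw [hu]; exact const_OBp _
    have huOA : rrOA u = u := by rw [hu]; exact const_OA _
    have huIA : rrIA u = u := by rw [hu]; exact const_IA _
    have huOB : rrOB u = u := by rw [hu]; exact const_OB _
    have huIB : rrIB u = u := by rw [hu]; exact const_IB _
    have huA : rrA u = u := by rw [hu]; exact const_rrA _
    have huB : rrB u = u := by rw [hu]; exact const_rrB _
    have hupos : Nonneg8 u := by
      intro a b c d e f g h
      simp only [hu]
      exact div_nonneg hDTpos.le hPTpos.le
    have htotu : tot u = DT := by
      rw [hu, tot_const, ← hPT, mul_comm, div_mul_cancel₀ _ (ne_of_gt hPTpos)]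
    set E : ℝ := lam⁻¹ with hE
    set W1 : WTen IA' OA IB' OB IA OA' IB OB' := u + E • Z with hW1def
    set W2 : WTen IA' OA IB' OB IA OA' IB OB' := bet • V + (1 - bet) • u with hW2def
    have hW1OBp : rrOB' W1 = W1 := by rw [hW1def, add_OBp, smul_OBp, hZOBp, huOBp]
    have hW1OAp : rrOA' W1 = u := by
      rw [hW1def, add_OAp, smul_OAp, hZOAp, huOAp, smul_zero, add_zero]
    have hEneg : E = -(DT / (cc * PT)) := by rw [hE, hlam, ← neg_div, inv_div, div_neg]
    have hW1pos : Nonneg8 W1 := by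
      intro a b c d e f g h
      simp only [hW1def, wadd_apply, wsmul_apply, hu, hEneg]
      have hfrac : (0:ℝ) ≤ DT / (cc * PT) :=
        div_nonneg hDTpos.le (mul_pos hccpos hPTpos).le
      have h1 : DT / (cc * PT) * Z a b c d e f g h ≤ DT / (cc * PT) * cc :=
        mul_le_mul_of_nonneg_left (hZle a b c d e f g h) hfrac
      have h2 : DT / (cc * PT) * cc = DT / PT := by
        field_simp
      linarith
    have htotW1 : tot W1 = DT := by
      rw [hW1def, tot_add, tot_smul, htotu, htotZ, mul_zero, add_zero]
    have hrrAW1 : rrA W1 = u := by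
      rw [hW1def, add_rrA, smul_rrA, hZA, smul_zero, add_zero, huA]
    have hrrBW1 : rrB W1 = u := by
      rw [hW1def, add_rrB, smul_rrB, hZB, smul_zero, add_zero, huB]
    have hW1c2 : rrA W1 = rrOB' (rrA W1) := by rw [hrrAW1, huOBp]
    have hW1c3 : rrB W1 = rrOA' (rrB W1) := by rw [hrrBW1, huOAp]
    have hW1c4 : W1 = rrOA' W1 + rrOB' W1 - rrOA' (rrOB' W1) := by
      rw [hW1OBp, hW1OAp]; abel
    have hW1c5a : rrOA W1 = rrIA (rrOA W1) := by
      rw [hW1def, add_OA, smul_OA, add_IA, smul_IA, huOA, huIA, ← hZ5a]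
    have hW1c5b : rrOB W1 = rrIB (rrOB W1) := by
      rw [hW1def, add_OB, smul_OB, add_IB, smul_IB, huOB, huIB, ← hZ5b]
    have hW2OAp : rrOA' W2 = W2 := by
      rw [hW2def, add_OAp, smul_OAp, smul_OAp, hVOAp, huOAp]
    have hW2pos : Nonneg8 W2 := by
      intro a b c d e f g h
      simp only [hW2def, wadd_apply, wsmul_apply]
      have h1 := hVpos a b c d e f g h
      have h2 := hupos a b c d e f g h
      have h3 : (0:ℝ) ≤ 1 - bet := by linarith
      exact add_nonneg (mul_nonneg hbetpos.le h1) (mul_nonneg h3 h2)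
    have htotW2 : tot W2 = DT := by
      rw [hW2def, tot_add, tot_smul, tot_smul, htotV, htotu]; ring
    have hW2c2 : rrA W2 = rrOB' (rrA W2) := by
      rw [hW2def, add_rrA, smul_rrA, smul_rrA, hAV, huA, add_OBp, smul_OBp, smul_OBp,
        huOBp, ← hWc2]
    have hW2c3 : rrB W2 = rrOA' (rrB W2) := by
      rw [hW2def, add_rrB, smul_rrB, smul_rrB, hBV, huB, add_OAp, smul_OAp, smul_OAp,
        huOAp, idem_OAp]
    have hW2c4 : W2 = rrOA' W2 + rrOB' W2 - rrOA' (rrOB' W2) := by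
      have hOB2 : rrOA' (rrOB' W2) = rrOB' W2 := by
        rw [hW2def, add_OBp, smul_OBp, smul_OBp, huOBp, add_OAp, smul_OAp, smul_OAp,
          huOAp, comm_OAp_OBp, hVOAp]
      rw [hW2OAp, hOB2]; abel
    have hW2c5a : rrOA W2 = rrIA (rrOA W2) := by
      rw [hW2def, add_OA, smul_OA, smul_OA, add_IA, smul_IA, smul_IA, huOA, huIA, ← hV5a]
    have hW2c5b : rrOB W2 = rrIB (rrOB W2) := by
      rw [hW2def, add_OB, smul_OB, smul_OB, add_IB, smul_IB, smul_IB, huOB, huIB, ← hV5b]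
    have hWVZ : W = V + Z := by rw [hZ, hWc4]; abel
    refine ⟨lam, W1, W2,
      ⟨hW1pos, htotW1.trans hDT, hW1c2, hW1c3, hW1c4, hW1c5a, hW1c5b⟩, hW1OBp.symm,
      ⟨hW2pos, htotW2.trans hDT, hW2c2, hW2c3, hW2c4, hW2c5a, hW2c5b⟩, hW2OAp.symm, ?_⟩
    rw [hWVZ, hW1def, hW2def]
    funext a b c d e f g h
    simp only [wadd_apply, wsmul_apply, hu, hE, hbet]
    field_simp
    ring
  · rintro ⟨lam, W1, W2, ⟨h1pos, h1tot, h1c2, h1c3, h1c4, h1c5a, h1c5b⟩, hord1,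
      ⟨h2pos, h2tot, h2c2, h2c3, h2c4, h2c5a, h2c5b⟩, hord2, hsum⟩
    refine ⟨hpos, ?_, ?_, ?_, ?_, ?_, ?_⟩
    · rw [hsum, tot_add, tot_smul, tot_smul, h1tot, h2tot]; ring
    · rw [hsum, add_rrA, smul_rrA, smul_rrA, add_OBp, smul_OBp, smul_OBp, ← h1c2, ← h2c2]
    · rw [hsum, add_rrB, smul_rrB, smul_rrB, add_OAp, smul_OAp, smul_OAp, ← h1c3, ← h2c3]
    · rw [hsum]
      simp only [add_OAp, smul_OAp, add_OBp, smul_OBp]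
      conv_lhs => rw [h1c4, h2c4]
      simp only [smul_add, smul_sub]
      abel
    · rw [hsum, add_OA, smul_OA, smul_OA, add_IA, smul_IA, smul_IA, ← h1c5a, ← h2c5a]
    · rw [hsum, add_OB, smul_OB, smul_OB, add_IB, smul_IB, smul_IB, ← h1c5b, ← h2c5b]

  

end Boxworld

end
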